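/- arXiv:2603.26315 — 3 statements merged into one kernel-verified Lean document; each statement's English description precedes it below -/
import Mathlib

section
/- Let r ≥ 2 be an integer and let C_5 = ⟨g⟩ be a cyclic group of order 5. The element 1 + 4g is a unit of the group algebra Z_{2^r}C_5, and its order in the unit group of Z_{2^r}C_5 is 2^{r−2}. -/
/-!
Squaring `1 + 2^(m+2) t` gives `1 + 2^(m+3) (t + 2^(m+1) t^2)`, so by induction
`(1 + 4a)^(2^m) = 1 + 2^(m+2) (a + 2c)` for some `c`. In a ring where `2^(n+2) = 0` this makes
`(1 + 4a)^(2^n) = 1` while, for `n ≥ 1`, `(1 + 4a)^(2^(n-1)) = 1 + 2^(n+1) a`, so the order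
of `1 + 4a` is exactly `2^n` as soon as `2^(n+1) a ≠ 0`. In `ℤ/2^r [G]` take `n = r - 2` and
`a = g`.
-/

theorem exists_one_add_four_mul_pow_two_pow_of_comm {R : Type*} [CommSemiring R] (a : R)
    (m : ℕ) : ∃ c : R, (1 + 4 * a) ^ 2 ^ m = 1 + 2 ^ (m + 2) * (a + 2 * c) := by
  induction m with
  | zero => exact ⟨0, by norm_num⟩
  | succ m ih =>
    obtain ⟨c, hc⟩ := ih
    refine ⟨c + 2 ^ m * (a + 2 * c) ^ 2, ?_⟩
    rw [pow_succ, pow_mul, hc]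
    ring

section Semiring

variable {A : Type*} [Semiring A]

-- The identity lives in the commutative semiring `ℕ[X]`; evaluate it at `a`.
theorem exists_one_add_four_mul_pow_two_pow (a : A) (m : ℕ) :
    ∃ c : A, (1 + 4 * a) ^ 2 ^ m = 1 + 2 ^ (m + 2) * (a + 2 * c) := by
  obtain ⟨c, hc⟩ := exists_one_add_four_mul_pow_two_pow_of_comm (.X : Polynomial ℕ) m
  exact ⟨Polynomial.aeval a c, by simpa [map_ofNat] using congr(Polynomial.aeval a $hc)⟩

theorem one_add_four_mul_pow_two_pow_of_two_pow_eq_zero {n : ℕ} (h2 : (2 : A) ^ (n + 2) = 0)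
    (a : A) : (1 + 4 * a) ^ 2 ^ n = 1 := by
  obtain ⟨c, hc⟩ := exists_one_add_four_mul_pow_two_pow a n
  rw [hc, h2, zero_mul, add_zero]

theorem one_add_four_mul_pow_two_pow_of_two_pow_succ_eq_zero {n : ℕ}
    (h2 : (2 : A) ^ (n + 3) = 0) (a : A) : (1 + 4 * a) ^ 2 ^ n = 1 + 2 ^ (n + 2) * a := by
  obtain ⟨c, hc⟩ := exists_one_add_four_mul_pow_two_pow a n
  rw [hc, mul_add, ← mul_assoc, ← pow_succ, h2, zero_mul, add_zero]

end Semiring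

theorem orderOf_one_add_four_mul {A : Type*} [Ring A] {n : ℕ} (h2 : (2 : A) ^ (n + 2) = 0)
    {a : A} (ha : 2 ^ (n + 1) * a ≠ 0) : orderOf (1 + 4 * a) = 2 ^ n := by
  cases n with
  | zero =>
    have h4 : (4 : A) = 0 := by norm_num at h2; exact h2
    simp [h4]
  | succ n =>
    have : Fact (Nat.Prime 2) := ⟨Nat.prime_two⟩
    refine orderOf_eq_prime_pow ?_ (one_add_four_mul_pow_two_pow_of_two_pow_eq_zero h2 a)
    rw [one_add_four_mul_pow_two_pow_of_two_pow_succ_eq_zero h2, add_eq_left]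
    exact ha

namespace MonoidAlgebra

variable {R G : Type*}

theorem natCast_mul_of [Semiring R] [MulOneClass G] (n : ℕ) (g : G) :
    (n : MonoidAlgebra R G) * of R G g = single g (n : R) := by
  rw [natCast_def, of_apply, single_mul_single, one_mul, mul_one]

theorem two_pow_eq_zero_of_zmod [Monoid G] (r : ℕ) :
    (2 : MonoidAlgebra (ZMod (2 ^ r)) G) ^ r = 0 := by
  rw [← Nat.cast_two (R := MonoidAlgebra _ G), ← Nat.cast_pow, natCast_def, ZMod.natCast_self,
    single_zero]

end MonoidAlgebra

theorem orderOf_one_add_four_g_general (r : ℕ) (hr : 2 ≤ r) (G : Type*) [Group G]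
    (g : G) :
    ∃ v : (MonoidAlgebra (ZMod (2 ^ r)) G)ˣ,
      (v : MonoidAlgebra (ZMod (2 ^ r)) G)
          = 1 + 4 * MonoidAlgebra.of (ZMod (2 ^ r)) G g ∧
      orderOf v = 2 ^ (r - 2) := by
  obtain ⟨n, rfl⟩ := Nat.exists_eq_add_of_le' hr
  have h2 := MonoidAlgebra.two_pow_eq_zero_of_zmod (n + 2) (G := G)
  have hg : (2 : MonoidAlgebra (ZMod (2 ^ (n + 2))) G) ^ (n + 1) * .of _ G g ≠ 0 := by
    rw [← Nat.cast_two (R := MonoidAlgebra _ G), ← Nat.cast_pow, MonoidAlgebra.natCast_mul_of,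
      Ne, MonoidAlgebra.single_eq_zero, ZMod.natCast_eq_zero_iff,
      Nat.pow_dvd_pow_iff_le_right (by norm_num)]
    omega
  have hunit := IsUnit.of_pow_eq_one
    (one_add_four_mul_pow_two_pow_of_two_pow_eq_zero h2 (.of _ G g)) (by positivity)
  refine ⟨hunit.unit, hunit.unit_spec, ?_⟩
  rw [← orderOf_units, hunit.unit_spec, orderOf_one_add_four_mul h2 hg, Nat.add_sub_cancel]

/-- in `Z_{2^r} C_5`, `r ≥ 2`, the element `1 + 4g` is a unit
of order `2^(r-2)` in the unit group. -/
theorem orderOf_one_add_four_g (r : ℕ) (hr : 2 ≤ r) (G : Type*) [Group G] [Fintype G]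
    (g : G) (hg : orderOf g = 5) (hcard : Fintype.card G = 5) :
    ∃ v : (MonoidAlgebra (ZMod (2 ^ r)) G)ˣ,
      (v : MonoidAlgebra (ZMod (2 ^ r)) G)
          = 1 + 4 * MonoidAlgebra.of (ZMod (2 ^ r)) G g ∧
      orderOf v = 2 ^ (r - 2) :=
  orderOf_one_add_four_g_general r hr G g
end

section
/- Let p be a prime, r ≥ 1 an integer, and G a finite group whose order is not divisible by p. Then the Jacobson radical of the group algebra Z_{p^r}G equals the ideal generated by p, and every element of this ideal is nilpotent (so the ideal generated by p is a nil ideal). -/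
/-!
The ideal `(p)` of `(ZMod (p ^ r))[G]` is nil because `p` is central with `p ^ r = 0`, and a
nil left ideal lies in every maximal left ideal. Conversely, reducing coefficients mod `p`
maps `(ZMod (p ^ r))[G]` onto `(ZMod p)[G]`, which is semisimple by Maschke's theorem; so the
Jacobson radical lies in the kernel of the reduction, and that kernel is `(p)`.
-/

theorem Ideal.le_jacobson_bot_of_forall_isNilpotent {R : Type*} [Ring R] {I : Ideal R}
    (hI : ∀ x ∈ I, IsNilpotent x) : I ≤ Ideal.jacobson ⊥ := by
  intro x hx
  refine Ideal.mem_jacobson_iff.mpr fun y => ?_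
  obtain ⟨z, hz⟩ := (hI _ (I.mul_mem_left y hx)).isUnit_add_one.exists_left_inv
  exact ⟨z, by rw [mul_assoc, ← mul_add_one, hz, sub_self]; exact Ideal.zero_mem _⟩

theorem isNilpotent_of_mem_span_natCast {R : Type*} [Ring R] {n : ℕ}
    (hn : IsNilpotent (n : R)) {x : R} (hx : x ∈ Ideal.span {(n : R)}) : IsNilpotent x := by
  obtain ⟨a, rfl⟩ := Ideal.mem_span_singleton'.mp hx
  exact (Nat.cast_commute n a).symm.isNilpotent_mul_left hn

theorem Ring.jacobson_le_ker_of_isSemisimpleRing {R S : Type*} [Ring R] [Ring S]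
    [IsSemisimpleRing S] (f : R →+* S) (hf : Function.Surjective f) :
    Ring.jacobson R ≤ RingHom.ker f := by
  have : RingHomSurjective f := ⟨hf⟩
  rw [RingHom.ker_eq_comap_bot, ← IsSemisimpleRing.jacobson_eq_bot S]
  exact Ring.le_comap_jacobson f

theorem ZMod.ker_castHom {m n : ℕ} (h : n ∣ m) :
    RingHom.ker (ZMod.castHom h (ZMod n)) = Ideal.span {(n : ZMod m)} := by
  refine le_antisymm (fun x hx => ?_) ?_
  · obtain ⟨z, rfl⟩ := ZMod.intCast_surjective x
    rw [RingHom.mem_ker, ZMod.castHom_apply, ZMod.cast_intCast h,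
      ZMod.intCast_zmod_eq_zero_iff_dvd] at hx
    obtain ⟨w, rfl⟩ := hx
    exact Ideal.mem_span_singleton'.mpr ⟨w, by push_cast; ring⟩
  · rw [Ideal.span_le, Set.singleton_subset_iff, SetLike.mem_coe, RingHom.mem_ker, map_natCast,
      ZMod.natCast_self]

theorem MonoidAlgebra.ker_mapRingHom_le_span {k S G : Type*} [CommRing k] [Semiring S]
    [Monoid G] (f : k →+* S) {a : k} (h : RingHom.ker f ≤ Ideal.span {a}) :
    RingHom.ker (MonoidAlgebra.mapRingHom G f) ≤
      Ideal.span {algebraMap k (MonoidAlgebra k G) a} := by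
  intro x hx
  have hcoeff (g : G) : ∃ c, c * a = x.coeff g := by
    refine Ideal.mem_span_singleton'.mp (h ?_)
    rw [RingHom.mem_ker, ← MonoidAlgebra.coeff_mapRingHom, hx, MonoidAlgebra.coeff_zero,
      Finsupp.coe_zero, Pi.zero_apply]
  choose c hc using hcoeff
  rw [← MonoidAlgebra.sum_coeff_single x]
  refine Ideal.sum_mem _ fun g _ =>
    Ideal.mem_span_singleton'.mpr ⟨MonoidAlgebra.single g (c g), ?_⟩
  rw [MonoidAlgebra.coe_algebraMap, Function.comp_apply, Algebra.algebraMap_self, RingHom.id_apply,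
    MonoidAlgebra.single_mul_single, mul_one, hc]

/-- for a prime `p`, `r ≥ 1` and a finite group `G` with
`p ∤ |G|`, the Jacobson radical of `Z_{p^r}G` is the ideal generated by `p`,
and this ideal is nil. -/
theorem jacobson_radical_groupRing_ZModPow (p r : ℕ) [Fact p.Prime] (hr : 1 ≤ r)
    (G : Type*) [Group G] [Fintype G] (hG : ¬ p ∣ Fintype.card G) :
    Ideal.jacobson (⊥ : Ideal (MonoidAlgebra (ZMod (p ^ r)) G))
        = Ideal.span {(p : MonoidAlgebra (ZMod (p ^ r)) G)} ∧
      ∀ x ∈ Ideal.span {(p : MonoidAlgebra (ZMod (p ^ r)) G)}, IsNilpotent x := by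
  have hp_nil : IsNilpotent (p : MonoidAlgebra (ZMod (p ^ r)) G) := by
    rw [← map_natCast (algebraMap (ZMod (p ^ r)) _)]
    exact IsNilpotent.map ⟨r, by rw [← Nat.cast_pow, ZMod.natCast_self]⟩ _
  have hnil : ∀ x ∈ Ideal.span {(p : MonoidAlgebra (ZMod (p ^ r)) G)}, IsNilpotent x :=
    fun _ => isNilpotent_of_mem_span_natCast hp_nil
  have hpr : p ∣ p ^ r := dvd_pow_self p (by omega)
  have : NeZero (Nat.card G : ZMod p) :=
    ⟨by rwa [Nat.card_eq_fintype_card, Ne, ZMod.natCast_eq_zero_iff]⟩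
  let reduce := MonoidAlgebra.mapRingHom G (ZMod.castHom hpr (ZMod p))
  have hreduce : Function.Surjective reduce :=
    MonoidAlgebra.map_surjective _ (ZMod.castHom_surjective hpr)
  refine ⟨le_antisymm ?_ (Ideal.le_jacobson_bot_of_forall_isNilpotent hnil), hnil⟩
  calc Ideal.jacobson ⊥ = Ring.jacobson (MonoidAlgebra (ZMod (p ^ r)) G) := Ideal.jacobson_bot
    _ ≤ RingHom.ker reduce := Ring.jacobson_le_ker_of_isSemisimpleRing reduce hreduce
    _ ≤ _ := by
      rw [← map_natCast (algebraMap (ZMod (p ^ r)) _)]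
      exact MonoidAlgebra.ker_mapRingHom_le_span _ (ZMod.ker_castHom hpr).le
end

section
/- Let R be a commutative ring, G a finite group, and e an idempotent of the group algebra RG. Let C := {g ∈ G : g⁻¹ e g = e}, the stabilizer of e under conjugation by group elements, which is a subgroup of G, and suppose that (g⁻¹ e g) · e = 0 for every g ∈ G not in C. Let T be a right transversal of C in G with 1 ∈ T and k := [G : C]. Then f := Σ_{t ∈ T} t⁻¹ e t is a central idempotent of RG, and there is a ring isomorphism between the ring (RG)·f = {x·f : x ∈ RG} (a ring with multiplicative identity f, under the multiplication of RG) and the ring M_k((RC)·e) of k × k matrices over the ring (RC)·e = {y·e : y ∈ RC} (a ring with multiplicative identity e, under the multiplication of RG). -/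
/-!
Put `u t = t⁻¹ e` and `v t = e t` for `t ∈ T`. Since `e s e = s e` for `s ∈ C` and
`e s e = 0` for `s ∉ C`, the product `v s * u t = e (s t⁻¹) e` is `e` if `s = t` and `0`
otherwise: the `u t * v s` behave like matrix units. Any such system identifies the corner ring
`f A f`, `f = ∑ t, u t * v t`, with the `T × T` matrices over the corner `e A e`. Here `f` is
central, because `t⁻¹ e t` only depends on the coset `C t` and right translation permutes these
cosets; and `e (RG) e = (RC) e`, because `e` commutes with `RC` and `e x e = 0` for `x`
supported off `C`.
-/

namespace IsIdempotentElem

variable {A : Type*} [Semiring A] {e f : A}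

theorem corner_val_sum (he : IsIdempotentElem e) {ι : Type*} (s : Finset ι)
    (x : ι → he.Corner) :
    (∑ i ∈ s, x i).1 = ∑ i ∈ s, (x i).1 :=
  map_sum (NonUnitalSubsemiring.corner e).subtype x s

theorem mem_corner_iff_exists_eq_mul (hf : IsIdempotentElem f) (hc : f ∈ Set.center A) {x : A} :
    x ∈ Subsemigroup.corner f ↔ ∃ y, x = y * f := by
  rw [Subsemigroup.mem_corner_iff_mem_range_mul_right hf (Set.mem_center_iff.1 hc)]
  exact exists_congr fun _ => eq_comm

section MatrixUnits

variable {ι : Type*} [Fintype ι] {u v : ι → A}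

theorem mul_mul_eq_sum_mul_mul (hsum : ∑ i, u i * v i = f) {x : A} (hx : x * f = x) (y : A)
    (i j : ι) : v i * (x * y) * u j = ∑ l, v i * x * u l * (v l * y * u j) := by
  conv_lhs => rw [← hx, ← hsum]
  simp only [Finset.mul_sum, Finset.sum_mul, mul_assoc]

variable [DecidableEq ι] (hu : ∀ i, u i * e = u i) (hv : ∀ i, e * v i = v i)
  (hvu : ∀ i j, v i * u j = if i = j then e else 0)

include hu hvu in
theorem isIdempotentElem_sum_mul : IsIdempotentElem (∑ i, u i * v i) := by
  unfold IsIdempotentElem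
  simp_rw [Finset.sum_mul_sum, mul_assoc, ← mul_assoc (v _), hvu]
  simp [← mul_assoc, hu]

include hu hvu in
theorem sum_mul_mul_eq_self (j : ι) : (∑ i, u i * v i) * u j = u j := by
  simp_rw [Finset.sum_mul, mul_assoc, hvu]
  simp [hu]

include hv hvu in
theorem mul_sum_mul_eq_self (i : ι) : v i * (∑ j, u j * v j) = v i := by
  simp_rw [Finset.mul_sum, ← mul_assoc, hvu]
  simp [hv]

include hvu in
theorem mul_sum_sum_mul (m : ι → ι → A) (a b : ι) :
    v a * (∑ i, ∑ j, u i * m i j * v j) * u b = e * m a b * e := by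
  simp_rw [Finset.mul_sum, Finset.sum_mul, ← mul_assoc, hvu, mul_assoc _ (v _), hvu]
  simp

def cornerRingEquivMatrix (he : IsIdempotentElem e) (hf : IsIdempotentElem f)
    (hsum : ∑ i, u i * v i = f) : hf.Corner ≃+* Matrix ι ι he.Corner where
  toFun x := .of fun i j => ⟨v i * x.1 * u j, (Subsemigroup.mem_corner_iff he).2
    ⟨by rw [← mul_assoc, ← mul_assoc, hv], by rw [mul_assoc, hu]⟩⟩
  invFun M := ⟨∑ i, ∑ j, u i * (M i j).1 * v j, (Subsemigroup.mem_corner_iff hf).2 ⟨by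
    simp_rw [Finset.mul_sum, ← mul_assoc, ← hsum, sum_mul_mul_eq_self hu hvu], by
    simp_rw [Finset.sum_mul, mul_assoc, ← hsum, mul_sum_mul_eq_self hv hvu]⟩⟩
  left_inv := by
    rintro ⟨x, hx⟩
    obtain ⟨hfx, hxf⟩ := (Subsemigroup.mem_corner_iff hf).1 hx
    refine Subtype.ext ?_
    change ∑ i, ∑ j, u i * (v i * x * u j) * v j = x
    conv_rhs => rw [← hxf, ← hfx, ← hsum]
    simp_rw [Finset.sum_mul, Finset.mul_sum, mul_assoc]
  right_inv M := by
    funext a b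
    obtain ⟨heM, hMe⟩ := (Subsemigroup.mem_corner_iff he).1 (M a b).2
    refine Subtype.ext ?_
    change v a * (∑ i, ∑ j, u i * (M i j).1 * v j) * u b = (M a b).1
    rw [mul_sum_sum_mul hvu, heM, hMe]
  map_mul' x y := by
    funext i j
    refine Subtype.ext ?_
    refine (mul_mul_eq_sum_mul_mul hsum ((Subsemigroup.mem_corner_iff hf).1 x.2).2 y.1 i j).trans ?_
    rw [Matrix.mul_apply, corner_val_sum]
    rfl
  map_add' x y := by
    funext i j
    refine Subtype.ext ?_
    change v i * (x.1 + y.1) * u j = v i * x.1 * u j + v i * y.1 * u j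
    rw [mul_add, add_mul]

end MatrixUnits

end IsIdempotentElem

namespace Subgroup

variable {G : Type*} [Group G] {H : Subgroup G} {T : Set G}

theorem isComplement_of_existsUnique_mul_inv_mem
    (hT : ∀ x : G, ∃! t, t ∈ T ∧ x * t⁻¹ ∈ H) :
    IsComplement (H : Set G) T :=
  isComplement_iff_existsUnique_mul_inv_mem.2 fun g => by
    obtain ⟨t, ⟨htT, ht⟩, huniq⟩ := hT g
    exact ⟨⟨t, htT⟩, ht, fun s hs => Subtype.ext (huniq s ⟨s.2, hs⟩)⟩

theorem IsComplement.mul_inv_mem_iff (hT : IsComplement (H : Set G) T) {s t : G} (hs : s ∈ T)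
    (ht : t ∈ T) : s * t⁻¹ ∈ H ↔ s = t := by
  refine ⟨fun h => ?_, fun h => h ▸ by simp⟩
  exact congrArg Subtype.val <| (isComplement_iff_existsUnique_mul_inv_mem.1 hT s).unique
    (y₁ := ⟨s, hs⟩) (y₂ := ⟨t, ht⟩) (by simp) h

theorem IsComplement.toRightFun_eq (hT : IsComplement (H : Set G) T) {x t : G} (ht : t ∈ T)
    (h : x * t⁻¹ ∈ H) : (hT.toRightFun x : G) = t := by
  refine (hT.mul_inv_mem_iff (hT.toRightFun x).2 ht).1 ?_
  simpa [mul_assoc] using H.mul_mem (inv_mem (hT.mul_inv_toRightFun_mem x)) h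

theorem IsComplement.sum_comp_mul_right {M : Type*} [AddCommMonoid M] {T : Finset G}
    (hT : IsComplement (H : Set G) (T : Set G)) {F : G → M}
    (hF : ∀ c ∈ H, ∀ x, F (c * x) = F x) (g : G) :
    ∑ t ∈ T, F (t * g) = ∑ t ∈ T, F t := by
  let rep : G → G := fun x => hT.toRightFun x
  have rep_mem (x : G) : rep x ∈ T := (hT.toRightFun x).2
  have F_rep (x : G) : F (rep x) = F x := by
    simpa using hF _ (inv_mem (hT.mul_inv_toRightFun_mem x)) x
  refine Finset.sum_nbij' (fun t => rep (t * g)) (fun t => rep (t * g⁻¹))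
    (fun t _ => rep_mem _) (fun t _ => rep_mem _) (fun t ht => ?_) (fun t ht => ?_)
    (fun t _ => (F_rep _).symm)
  · refine hT.toRightFun_eq ht ?_
    simpa [mul_assoc] using inv_mem (hT.mul_inv_toRightFun_mem (t * g))
  · refine hT.toRightFun_eq ht ?_
    simpa [mul_assoc] using inv_mem (hT.mul_inv_toRightFun_mem (t * g⁻¹))

end Subgroup

namespace MonoidAlgebra

variable {R : Type*} {G : Type*} [Group G] {C : Subgroup G}

section Semiring

variable [Semiring R] {e : R[G]}

theorem of_mul_conj (g : G) (x : R[G]) :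
    of R G g * (of R G g⁻¹ * x * of R G g) = x * of R G g := by
  rw [← mul_assoc, ← mul_assoc, ← map_mul, mul_inv_cancel, map_one, one_mul]

theorem conj_mul_of_mem (hC : ∀ c ∈ C, of R G c⁻¹ * e * of R G c = e) {c : G} (hc : c ∈ C)
    (x : G) : of R G (c * x)⁻¹ * e * of R G (c * x) = of R G x⁻¹ * e * of R G x := by
  calc of R G (c * x)⁻¹ * e * of R G (c * x)
      = of R G x⁻¹ * (of R G c⁻¹ * e * of R G c) * of R G x := by
        simp only [mul_inv_rev, map_mul, mul_assoc]
    _ = of R G x⁻¹ * e * of R G x := by rw [hC c hc]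

theorem mul_of_mul_of_mem (he : IsIdempotentElem e)
    (hC : ∀ c ∈ C, of R G c⁻¹ * e * of R G c = e) {g : G} (hg : g ∈ C) :
    e * of R G g * e = of R G g * e := by
  rw [← of_mul_conj g e, hC g hg, he.mul_mul_self]

theorem mul_of_mul_of_notMem (horth : ∀ g ∉ C, of R G g⁻¹ * e * of R G g * e = 0)
    {g : G} (hg : g ∉ C) : e * of R G g * e = 0 := by
  rw [← of_mul_conj g e, mul_assoc, horth g hg, mul_zero]

variable (he : IsIdempotentElem e) (horth : ∀ g ∉ C, of R G g⁻¹ * e * of R G g * e = 0)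
  {T : Finset G} (hT : Subgroup.IsComplement (C : Set G) (T : Set G)) {ι : Type*}

include he horth hT in
theorem mul_of_mul_of_inv_mul_eq_ite [DecidableEq ι] {τ : ι → G} (hτ : Function.Injective τ)
    (hτT : ∀ i, τ i ∈ T) (i j : ι) :
    e * of R G (τ i) * (of R G (τ j)⁻¹ * e) = if i = j then e else 0 := by
  rw [← mul_assoc, mul_assoc e, ← map_mul]
  split_ifs with hij
  · rw [hij, mul_inv_cancel, map_one, mul_one, he.eq]
  · refine mul_of_mul_of_notMem horth fun h => hij (hτ ?_)
    exact (hT.mul_inv_mem_iff (hτT i) (hτT j)).1 h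

variable [Fintype ι]

include he in
theorem sum_mul_mul_eq_sum_conj (τ : ι ≃ T) :
    ∑ i, of R G (τ i : G)⁻¹ * e * (e * of R G (τ i : G)) =
      ∑ t ∈ T, of R G t⁻¹ * e * of R G t := by
  rw [← T.sum_coe_sort, ← τ.sum_comp]
  exact Finset.sum_congr rfl fun i _ => by rw [← mul_assoc, he.mul_mul_self]

include he horth hT

theorem isIdempotentElem_sum_conj :
    IsIdempotentElem (∑ t ∈ T, of R G t⁻¹ * e * of R G t) := by
  classical
  rw [← sum_mul_mul_eq_sum_conj he (Equiv.refl T)]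
  exact IsIdempotentElem.isIdempotentElem_sum_mul (fun _ => he.mul_mul_self _)
    (mul_of_mul_of_inv_mul_eq_ite he horth hT Subtype.val_injective fun t => t.2)

noncomputable def cornerSumConjRingEquivMatrix [DecidableEq ι] (τ : ι ≃ T) :
    (isIdempotentElem_sum_conj he horth hT).Corner ≃+* Matrix ι ι he.Corner :=
  IsIdempotentElem.cornerRingEquivMatrix (fun _ => he.mul_mul_self _)
    (fun _ => he.mul_self_mul _)
    (mul_of_mul_of_inv_mul_eq_ite he horth hT (Subtype.val_injective.comp τ.injective)
      fun i => (τ i).2) he _ (sum_mul_mul_eq_sum_conj he τ)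

end Semiring

section CommSemiring

variable [CommSemiring R] {e : R[G]} (hC : ∀ c ∈ C, of R G c⁻¹ * e * of R G c = e)
include hC

theorem commute_mapDomain_subtype (y : R[C]) : Commute (mapDomainRingHom R C.subtype y) e := by
  induction y using MonoidAlgebra.induction_on with
  | of c =>
    have := of_mul_conj (c : G) e
    rw [hC c c.2] at this
    simpa [Commute, SemiconjBy] using this
  | add y z hy hz => rw [map_add]; exact hy.add_left hz
  | smul r y hy => simpa [mapDomain_smul] using hy.smul_left r

theorem sum_conj_mem_center {T : Finset G} (hT : Subgroup.IsComplement (C : Set G) (T : Set G)) :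
    ∑ t ∈ T, of R G t⁻¹ * e * of R G t ∈ Set.center R[G] := by
  refine Semigroup.mem_center_iff.2 fun x => ?_
  induction x using MonoidAlgebra.induction_on with
  | of g =>
    have hconj := hT.sum_comp_mul_right (F := fun x => of R G x⁻¹ * e * of R G x)
      (fun c hc x => conj_mul_of_mem hC hc x) g
    simp only [mul_inv_rev, map_mul, mul_assoc, ← Finset.mul_sum] at hconj
    simp only [← mul_assoc, ← Finset.sum_mul] at hconj
    rw [← of_mul_conj g, hconj]
  | add x y hx hy => rw [add_mul, mul_add, hx, hy]
  | smul r x hx => rw [smul_mul_assoc, mul_smul_comm, hx]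

variable (he : IsIdempotentElem e) (horth : ∀ g ∉ C, of R G g⁻¹ * e * of R G g * e = 0)
include he horth

theorem exists_mul_mul_eq_mapDomain_mul (x : R[G]) :
    ∃ y : R[C], e * x * e = mapDomainRingHom R C.subtype y * e := by
  induction x using MonoidAlgebra.induction_on with
  | of g =>
    by_cases hg : g ∈ C
    · exact ⟨of R C ⟨g, hg⟩, by rw [mul_of_mul_of_mem he hC hg]; simp⟩
    · exact ⟨0, by rw [mul_of_mul_of_notMem horth hg, map_zero, zero_mul]⟩
  | add x z hx hz =>
    obtain ⟨y, hy⟩ := hx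
    obtain ⟨w, hw⟩ := hz
    exact ⟨y + w, by rw [map_add, add_mul, ← hy, ← hw, mul_add, add_mul]⟩
  | smul r x hx =>
    obtain ⟨y, hy⟩ := hx
    exact ⟨r • y, by simp [hy, mapDomain_smul]⟩

theorem mem_corner_iff_exists_mapDomain_mul {x : R[G]} :
    x ∈ Subsemigroup.corner e ↔ ∃ y : R[C], x = mapDomainRingHom R C.subtype y * e := by
  constructor
  · rintro ⟨x, rfl⟩
    exact exists_mul_mul_eq_mapDomain_mul hC he horth x
  · rintro ⟨y, rfl⟩
    refine ⟨mapDomainRingHom R C.subtype y, ?_⟩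
    show e * _ * e = _
    rw [← (commute_mapDomain_subtype hC y).eq, he.mul_mul_self]

end CommSemiring

end MonoidAlgebra

theorem matrix_ring_decomposition_of_strong_idempotent_general (R : Type*) [CommRing R]
    (G : Type*) [Group G]
    (e : MonoidAlgebra R G) (he : e * e = e)
    (C : Subgroup G)
    (hC : ∀ g : G, g ∈ C ↔
      MonoidAlgebra.of R G g⁻¹ * e * MonoidAlgebra.of R G g = e)
    (horth : ∀ g : G, g ∉ C →
      (MonoidAlgebra.of R G g⁻¹ * e * MonoidAlgebra.of R G g) * e = 0)
    (T : Finset G)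
    (hT : ∀ x : G, ∃! t, t ∈ T ∧ x * t⁻¹ ∈ C)
    (k : ℕ) (hk : k = C.index)
    (f : MonoidAlgebra R G)
    (hf : f = ∑ t ∈ T, MonoidAlgebra.of R G t⁻¹ * e * MonoidAlgebra.of R G t) :
    (f * f = f ∧ ∀ x : MonoidAlgebra R G, f * x = x * f) ∧
    ∃ φ : {x : MonoidAlgebra R G // ∃ y, x = y * f} ≃
        Matrix (Fin k) (Fin k)
          {x : MonoidAlgebra R G // ∃ y : MonoidAlgebra R C,
            x = MonoidAlgebra.mapDomainRingHom R C.subtype y * e},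
      (∀ (x₁ x₂ : MonoidAlgebra R G) (h₁ : ∃ y, x₁ = y * f) (h₂ : ∃ y, x₂ = y * f)
          (h₁₂ : ∃ y, x₁ + x₂ = y * f) (i j : Fin k),
        (φ ⟨x₁ + x₂, h₁₂⟩ i j).1 = (φ ⟨x₁, h₁⟩ i j).1 + (φ ⟨x₂, h₂⟩ i j).1) ∧
      (∀ (x₁ x₂ : MonoidAlgebra R G) (h₁ : ∃ y, x₁ = y * f) (h₂ : ∃ y, x₂ = y * f)
          (h₁₂ : ∃ y, x₁ * x₂ = y * f) (i j : Fin k),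
        (φ ⟨x₁ * x₂, h₁₂⟩ i j).1 = ∑ l : Fin k, (φ ⟨x₁, h₁⟩ i l).1 * (φ ⟨x₂, h₂⟩ l j).1) := by
  subst hf
  have he : IsIdempotentElem e := he
  have hC' (c : G) (hc : c ∈ C) := (hC c).1 hc
  have hT' : Subgroup.IsComplement (C : Set G) (T : Set G) :=
    Subgroup.isComplement_of_existsUnique_mul_inv_mem (by simpa using hT)
  let τ : Fin k ≃ T :=
    (T.equivFinOfCardEq (by rw [hk, ← hT'.ncard_right, Set.ncard_coe_finset])).symm
  have hidem := MonoidAlgebra.isIdempotentElem_sum_conj he horth hT'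
  have hcent := MonoidAlgebra.sum_conj_mem_center hC' hT'
  let φ := (Equiv.subtypeEquivRight fun _ =>
      (IsIdempotentElem.mem_corner_iff_exists_eq_mul hidem hcent).symm).trans <|
    (MonoidAlgebra.cornerSumConjRingEquivMatrix he horth hT' τ).toEquiv.trans <|
    Equiv.mapMatrix <| Equiv.subtypeEquivRight fun _ =>
      MonoidAlgebra.mem_corner_iff_exists_mapDomain_mul hC' he horth
  have hφ (x : MonoidAlgebra R G) (h) (i j : Fin k) : (φ ⟨x, h⟩ i j).1 =
      e * MonoidAlgebra.of R G (τ i : G) * x * (MonoidAlgebra.of R G (τ j : G)⁻¹ * e) := rfl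
  refine ⟨⟨hidem.eq, fun x => (Semigroup.mem_center_iff.1 hcent x).symm⟩, φ, ?_, ?_⟩
  · intro x₁ x₂ h₁ h₂ h₁₂ i j
    simp only [hφ, mul_add, add_mul]
  · rintro x₁ x₂ ⟨y, rfl⟩ h₂ h₁₂ i j
    simp only [hφ]
    exact IsIdempotentElem.mul_mul_eq_sum_mul_mul (MonoidAlgebra.sum_mul_mul_eq_sum_conj he τ)
      (hidem.mul_mul_self y) x₂ i j

/-- let `e` be an idempotent of `RG`, `C` its conjugation
stabilizer, with distinct conjugates of `e` orthogonal to `e`, `T` a right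
transversal of `C` in `G` containing `1`, and `k = [G : C]`.  Then
`f = ∑_{t ∈ T} t⁻¹ e t` is a central idempotent of `RG`, and the ring
`(RG)·f` is isomorphic to the ring of `k × k` matrices over `(RC)·e`:
there is a bijection between `(RG)·f` and `k × k` matrices with entries in
`(RC)·e` which is additive and sends products to matrix products. -/
theorem matrix_ring_decomposition_of_strong_idempotent (R : Type*) [CommRing R]
    (G : Type*) [Group G] [Fintype G]
    (e : MonoidAlgebra R G) (he : e * e = e)
    (C : Subgroup G)
    (hC : ∀ g : G, g ∈ C ↔
      MonoidAlgebra.of R G g⁻¹ * e * MonoidAlgebra.of R G g = e)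
    (horth : ∀ g : G, g ∉ C →
      (MonoidAlgebra.of R G g⁻¹ * e * MonoidAlgebra.of R G g) * e = 0)
    (T : Finset G) (hone : (1 : G) ∈ T)
    (hT : ∀ x : G, ∃! t, t ∈ T ∧ x * t⁻¹ ∈ C)
    (k : ℕ) (hk : k = C.index)
    (f : MonoidAlgebra R G)
    (hf : f = ∑ t ∈ T, MonoidAlgebra.of R G t⁻¹ * e * MonoidAlgebra.of R G t) :
    (f * f = f ∧ ∀ x : MonoidAlgebra R G, f * x = x * f) ∧
    ∃ φ : {x : MonoidAlgebra R G // ∃ y, x = y * f} ≃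
        Matrix (Fin k) (Fin k)
          {x : MonoidAlgebra R G // ∃ y : MonoidAlgebra R C,
            x = MonoidAlgebra.mapDomainRingHom R C.subtype y * e},
      (∀ (x₁ x₂ : MonoidAlgebra R G) (h₁ : ∃ y, x₁ = y * f) (h₂ : ∃ y, x₂ = y * f)
          (h₁₂ : ∃ y, x₁ + x₂ = y * f) (i j : Fin k),
        (φ ⟨x₁ + x₂, h₁₂⟩ i j).1 = (φ ⟨x₁, h₁⟩ i j).1 + (φ ⟨x₂, h₂⟩ i j).1) ∧
      (∀ (x₁ x₂ : MonoidAlgebra R G) (h₁ : ∃ y, x₁ = y * f) (h₂ : ∃ y, x₂ = y * f)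
          (h₁₂ : ∃ y, x₁ * x₂ = y * f) (i j : Fin k),
        (φ ⟨x₁ * x₂, h₁₂⟩ i j).1 = ∑ l : Fin k, (φ ⟨x₁, h₁⟩ i l).1 * (φ ⟨x₂, h₂⟩ l j).1) :=
  matrix_ring_decomposition_of_strong_idempotent_general R G e he C hC horth T hT k hk f hf
end
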